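/- Let X be a 2-based Banach space with constants c, C whose natural parameterization r : ℝ → S_X is continuously differentiable, let L be the half-length of S_X, and let φ : ℝ → ℝ be the phase shift, i.e. for each s, φ(s) is the unique number in (s, s + 2L) with r'(s) = r(φ(s)). For s ∈ ℝ let P(s), T(s) be the unique real numbers with r'(φ(s)) = −P(s)·r(s) + T(s)·r'(s). Then for every s ∈ ℝ: |T(s)| ≤ ((C + c)·C/c²)·|P(s)| and |P(s)| ≥ c²/(C² + C·c + c²). -/

import Mathlib

noncomputable section
open MeasureTheory Set Filter
open scoped ENNReal Topology

variable {X : Type*} [NormedAddCommGroup X] [NormedSpace ℝ X]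

/-- `e^{it} = cos t • e₁ + sin t • e₂` for the basis `b 0, b 1`. -/
def expV (b : Module.Basis (Fin 2) ℝ X) (t : ℝ) : X :=
  Real.cos t • b 0 + Real.sin t • b 1

/-- The polar parameterization `p(t) = e^{it}/‖e^{it}‖` of the unit sphere. -/
def polarParam (b : Module.Basis (Fin 2) ℝ X) (t : ℝ) : X :=
  ‖expV b t‖⁻¹ • expV b t

/-- The Euclidean norm `|x| = √(e₁*(x)² + e₂*(x)²)` associated to the basis. -/
def euclNorm (b : Module.Basis (Fin 2) ℝ X) (x : X) : ℝ :=
  Real.sqrt ((b.coord 0 x)^2 + (b.coord 1 x)^2)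

/-- `c = min{‖x‖ : |x| = 1}`. -/
def cConst (b : Module.Basis (Fin 2) ℝ X) : ℝ :=
  sInf (norm '' {x : X | euclNorm b x = 1})

/-- `C = max{‖x‖ : |x| = 1}`. -/
def CConst (b : Module.Basis (Fin 2) ℝ X) : ℝ :=
  sSup (norm '' {x : X | euclNorm b x = 1})

/-- The right derivative of a function `f : ℝ → X`. -/
def rightDeriv (f : ℝ → X) (t : ℝ) : X := derivWithin f (Ici t) t

/-- The left derivative of a function `f : ℝ → X`. -/
def leftDeriv (f : ℝ → X) (t : ℝ) : X := derivWithin f (Iic t) t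

/-- The arc-length function `s(t) = ∫₀^t ‖p'₊(u)‖ du`. -/
def arcLen (b : Module.Basis (Fin 2) ℝ X) (t : ℝ) : ℝ :=
  ∫ u in (0:ℝ)..t, ‖rightDeriv (polarParam b) u‖

/-- The half-length `L = s(π)` of the unit sphere. -/
def halfLen (b : Module.Basis (Fin 2) ℝ X) : ℝ := arcLen b Real.pi

/-- The inverse `t = s⁻¹` of the arc-length function. -/
def arcInv (b : Module.Basis (Fin 2) ℝ X) : ℝ → ℝ := Function.invFun (arcLen b)

/-- The natural parameterization `r = p ∘ t` of the unit sphere. -/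
def natParam (b : Module.Basis (Fin 2) ℝ X) : ℝ → X := polarParam b ∘ arcInv b

/-- Local absolute continuity of `f` with a.e. derivative `f'`, in the sense that `f` is
differentiable almost everywhere, `f'` is locally integrable, and `f` is recovered from `f'`
by integration. -/
def LocAC {E : Type*} [NormedAddCommGroup E] [NormedSpace ℝ E] [CompleteSpace E]
    (f f' : ℝ → E) : Prop :=
  (∀ᵐ t : ℝ, HasDerivAt f (f' t) t) ∧ LocallyIntegrable f' volume ∧
    ∀ a b : ℝ, a ≤ b → f b - f a = ∫ t in a..b, f' t

/-- `s` is a Lebesgue point of `g`. -/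
def LebesguePoint {E : Type*} [NormedAddCommGroup E] (g : ℝ → E) (s : ℝ) : Prop :=
  Tendsto (fun ε : ℝ => (1/ε) * ∫ t in (0:ℝ)..ε, ‖g (s + t) - g s‖) (𝓝[≠] (0:ℝ)) (𝓝 0)


/-!
Areas are measured by the determinant relative to the basis. Comparing `‖·‖` with the
Euclidean norm gives `c² |det(x, y)| ≤ 1` for unit vectors `x, y`, while a unit vector `z` whose
line `y + ℝ z` avoids the open unit ball has `1 ≤ C² |det(y, z)|`, because the Euclidean distance
from `0` to that line is at least `1 / C`. Put `A = det(r(s), r'(s))`. The defining relation of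
`P, T` gives `det(r(s), r'(φ s)) = T(s) A` and `det(r'(s), r'(φ s)) = P(s) A`, and
`r'(s) + ℝ r'(φ s)` is the tangent line of `S_X` at `r(φ s) = r'(s)`. Hence
`c² |T| |A| ≤ 1 ≤ C² |P| |A|` and `c² |A| ≤ 1`, so `c² |T| ≤ C² |P|` and `c² ≤ C² |P|`, which are
stronger than both claimed bounds.
-/

open Module

section EuclideanComparison

variable (b : Basis (Fin 2) ℝ X)

def Module.Basis.toEuclidean : X ≃L[ℝ] EuclideanSpace ℝ (Fin 2) :=
  b.equivFunL.trans (EuclideanSpace.equiv (Fin 2) ℝ).symm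

lemma euclNorm_eq_norm_toEuclidean (x : X) : euclNorm b x = ‖b.toEuclidean x‖ := by
  simp [EuclideanSpace.norm_eq, Fin.sum_univ_two, euclNorm, Basis.toEuclidean]

lemma euclNorm_sq (x : X) : euclNorm b x ^ 2 = b.coord 0 x ^ 2 + b.coord 1 x ^ 2 :=
  Real.sq_sqrt (by positivity)

lemma euclNorm_nonneg (x : X) : 0 ≤ euclNorm b x := Real.sqrt_nonneg _

lemma euclNorm_smul (a : ℝ) (x : X) : euclNorm b (a • x) = |a| * euclNorm b x := by
  rw [euclNorm_eq_norm_toEuclidean, euclNorm_eq_norm_toEuclidean, map_smul, norm_smul,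
    Real.norm_eq_abs]

lemma euclSphere_eq_image :
    {x : X | euclNorm b x = 1} = b.toEuclidean.symm '' Metric.sphere 0 1 := by
  rw [b.toEuclidean.symm.image_eq_preimage_symm]
  ext x
  simp [euclNorm_eq_norm_toEuclidean]

lemma euclNorm_eq_zero {x : X} : euclNorm b x = 0 ↔ x = 0 := by
  simp [euclNorm_eq_norm_toEuclidean]

lemma isCompact_euclSphere : IsCompact {x : X | euclNorm b x = 1} := by
  rw [euclSphere_eq_image]
  exact (isCompact_sphere 0 1).image b.toEuclidean.symm.continuous

lemma euclSphere_nonempty : {x : X | euclNorm b x = 1}.Nonempty := by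
  rw [euclSphere_eq_image]
  exact (NormedSpace.sphere_nonempty.mpr zero_le_one).image _

lemma exists_eq_euclNorm_smul (x : X) : ∃ y, euclNorm b y = 1 ∧ x = euclNorm b x • y := by
  rcases eq_or_ne x 0 with rfl | hx
  · obtain ⟨y, hy⟩ := euclSphere_nonempty b
    exact ⟨y, hy, by rw [(euclNorm_eq_zero b).2 rfl, zero_smul]⟩
  · have hx' : euclNorm b x ≠ 0 := (euclNorm_eq_zero b).not.2 hx
    refine ⟨(euclNorm b x)⁻¹ • x, ?_, by rw [smul_inv_smul₀ hx']⟩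
    rw [euclNorm_smul, abs_inv, abs_of_nonneg (euclNorm_nonneg b x), inv_mul_cancel₀ hx']

lemma cConst_le_norm {x : X} (hx : euclNorm b x = 1) : cConst b ≤ ‖x‖ :=
  csInf_le ⟨0, by rintro _ ⟨y, -, rfl⟩; exact norm_nonneg y⟩ ⟨x, hx, rfl⟩

lemma norm_le_CConst {x : X} (hx : euclNorm b x = 1) : ‖x‖ ≤ CConst b :=
  le_csSup ((isCompact_euclSphere b).image continuous_norm).bddAbove ⟨x, hx, rfl⟩

lemma cConst_pos : 0 < cConst b := by
  obtain ⟨x, hx, hcx⟩ := ((isCompact_euclSphere b).image continuous_norm).sInf_mem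
    ((euclSphere_nonempty b).image norm)
  have hx0 : x ≠ 0 := by
    rintro rfl
    simp [(euclNorm_eq_zero b).2] at hx
  rw [cConst, ← hcx]
  exact norm_pos_iff.mpr hx0

lemma cConst_le_CConst : cConst b ≤ CConst b := by
  obtain ⟨y, hy⟩ := euclSphere_nonempty b
  exact (cConst_le_norm b hy).trans (norm_le_CConst b hy)

lemma cConst_mul_euclNorm_le_norm (x : X) : cConst b * euclNorm b x ≤ ‖x‖ := by
  obtain ⟨y, hy, hxy⟩ := exists_eq_euclNorm_smul b x
  conv_rhs => rw [hxy, norm_smul, Real.norm_of_nonneg (euclNorm_nonneg b x), mul_comm]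
  exact mul_le_mul_of_nonneg_right (cConst_le_norm b hy) (euclNorm_nonneg b x)

lemma norm_le_CConst_mul_euclNorm (x : X) : ‖x‖ ≤ CConst b * euclNorm b x := by
  obtain ⟨y, hy, hxy⟩ := exists_eq_euclNorm_smul b x
  conv_lhs => rw [hxy, norm_smul, Real.norm_of_nonneg (euclNorm_nonneg b x), mul_comm]
  exact mul_le_mul_of_nonneg_right (norm_le_CConst b hy) (euclNorm_nonneg b x)

end EuclideanComparison

section Determinant

variable (b : Basis (Fin 2) ℝ X)

lemma Module.Basis.det_fin_two (x y : X) :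
    b.det ![x, y] = b.coord 0 x * b.coord 1 y - b.coord 0 y * b.coord 1 x := by
  simp [Basis.det_apply, Matrix.det_fin_two, Basis.toMatrix_apply]

lemma abs_det_le_euclNorm_mul_euclNorm (x y : X) :
    |b.det ![x, y]| ≤ euclNorm b x * euclNorm b y := by
  refine abs_le_of_sq_le_sq ?_ (mul_nonneg (euclNorm_nonneg b x) (euclNorm_nonneg b y))
  rw [mul_pow, euclNorm_sq, euclNorm_sq, b.det_fin_two]
  nlinarith [sq_nonneg (b.coord 0 x * b.coord 0 y + b.coord 1 x * b.coord 1 y)]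

lemma mul_euclNorm_le_abs_det {ρ : ℝ} {x u : X} (hρ : ∀ t : ℝ, ρ ≤ euclNorm b (x + t • u)) :
    ρ * euclNorm b u ≤ |b.det ![x, u]| := by
  rcases eq_or_ne u 0 with rfl | hu
  · simp [(euclNorm_eq_zero b).2]
  have hq : b.coord 0 u ^ 2 + b.coord 1 u ^ 2 ≠ 0 := by
    rw [← euclNorm_sq]; exact pow_ne_zero 2 ((euclNorm_eq_zero b).not.2 hu)
  -- `t₀` is the parameter of the foot of the Euclidean perpendicular from `0` to the line
  set t₀ := -(b.coord 0 x * b.coord 0 u + b.coord 1 x * b.coord 1 u) /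
    (b.coord 0 u ^ 2 + b.coord 1 u ^ 2) with ht₀
  have hfoot : euclNorm b (x + t₀ • u) * euclNorm b u = |b.det ![x, u]| := by
    refine (pow_left_inj₀ (mul_nonneg (euclNorm_nonneg b _) (euclNorm_nonneg b u))
      (abs_nonneg _) two_ne_zero).1 ?_
    rw [mul_pow, sq_abs, euclNorm_sq, euclNorm_sq, b.det_fin_two]
    simp only [map_add, map_smul, smul_eq_mul, ht₀]
    field_simp
    ring
  exact hfoot ▸ mul_le_mul_of_nonneg_right (hρ t₀) (euclNorm_nonneg b u)

lemma sq_cConst_mul_abs_det_le (x y : X) : cConst b ^ 2 * |b.det ![x, y]| ≤ ‖x‖ * ‖y‖ := by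
  have hc := (cConst_pos b).le
  calc cConst b ^ 2 * |b.det ![x, y]|
      ≤ cConst b ^ 2 * (euclNorm b x * euclNorm b y) := by
        gcongr; exact abs_det_le_euclNorm_mul_euclNorm b x y
    _ = (cConst b * euclNorm b x) * (cConst b * euclNorm b y) := by ring
    _ ≤ ‖x‖ * ‖y‖ := mul_le_mul (cConst_mul_euclNorm_le_norm b x)
        (cConst_mul_euclNorm_le_norm b y) (mul_nonneg hc (euclNorm_nonneg b y)) (norm_nonneg x)

lemma mul_norm_le_sq_CConst_mul_abs_det {ρ : ℝ} {x u : X} (hρ : ∀ t : ℝ, ρ ≤ ‖x + t • u‖) :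
    ρ * ‖u‖ ≤ CConst b ^ 2 * |b.det ![x, u]| := by
  have hC : 0 < CConst b := (cConst_pos b).trans_le (cConst_le_CConst b)
  rcases le_or_gt ρ 0 with hρ0 | hρ0
  · exact (mul_nonpos_of_nonpos_of_nonneg hρ0 (norm_nonneg u)).trans (by positivity)
  have hline : ∀ t : ℝ, ρ / CConst b ≤ euclNorm b (x + t • u) := fun t =>
    (div_le_iff₀' hC).2 ((hρ t).trans (norm_le_CConst_mul_euclNorm b _))
  calc ρ * ‖u‖ ≤ ρ * (CConst b * euclNorm b u) :=
        mul_le_mul_of_nonneg_left (norm_le_CConst_mul_euclNorm b u) hρ0.le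
    _ = CConst b ^ 2 * (ρ / CConst b * euclNorm b u) := by field_simp
    _ ≤ CConst b ^ 2 * |b.det ![x, u]| := by
        gcongr; exact mul_euclNorm_le_abs_det b hline

end Determinant

lemma norm_le_norm_add_smul_deriv {f : ℝ → X} {s : ℝ} (hmax : IsLocalMax (fun u => ‖f u‖) s)
    (hf : DifferentiableAt ℝ f s) (t : ℝ) : ‖f s‖ ≤ ‖f s + t • deriv f s‖ := by
  rcases eq_or_ne (f s) 0 with hs | hs
  · rw [hs, norm_zero]; exact norm_nonneg _
  obtain ⟨g, hg, hgs⟩ := exists_dual_vector ℝ (f s) (norm_ne_zero_iff.2 hs)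
  have hg_le : ∀ y : X, g y ≤ ‖y‖ := fun y =>
    (le_abs_self _).trans ((g.le_opNorm y).trans (by rw [hg, one_mul]))
  -- `g` supports the ball of radius `‖f s‖` at `f s`, so `g ∘ f` has a local maximum at `s`
  have hmax_g : IsLocalMax (fun u => g (f u)) s :=
    hmax.mono fun u hu => (hg_le (f u)).trans (hu.trans_eq hgs.symm)
  have hg_deriv : g (deriv f s) = 0 :=
    hmax_g.hasDerivAt_eq_zero (g.hasFDerivAt.comp_hasDerivAt s hf.hasDerivAt)
  calc ‖f s‖ = g (f s + t • deriv f s) := by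
        rw [map_add, map_smul, hg_deriv, smul_zero, add_zero, hgs]; rfl
    _ ≤ ‖f s + t • deriv f s‖ := hg_le _

section UnitSphere

variable (b : Basis (Fin 2) ℝ X)

lemma expV_ne_zero (t : ℝ) : expV b t ≠ 0 := by
  have hli : LinearIndependent ℝ ![b 0, b 1] := by
    convert b.linearIndependent
    ext i
    fin_cases i <;> rfl
  intro h
  obtain ⟨hcos, hsin⟩ := LinearIndependent.pair_iff.1 hli _ _ h
  simpa [hcos, hsin] using Real.sin_sq_add_cos_sq t

lemma norm_natParam (u : ℝ) : ‖natParam b u‖ = 1 :=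
  norm_smul_inv_norm (expV_ne_zero b _)

end UnitSphere

lemma sq_cConst_mul_abs_le_and_sq_cConst_le (b : Basis (Fin 2) ℝ X) {x y z : X} {p τ : ℝ}
    (hx : ‖x‖ = 1) (hy : ‖y‖ = 1) (hz : ‖z‖ = 1) (hline : ∀ t : ℝ, 1 ≤ ‖y + t • z‖)
    (hz_eq : z = (-p) • x + τ • y) :
    cConst b ^ 2 * |τ| ≤ CConst b ^ 2 * |p| ∧ cConst b ^ 2 ≤ CConst b ^ 2 * |p| := by
  set A := b.det ![x, y]
  have hxz : b.det ![x, z] = τ * A := by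
    simp only [A, hz_eq, b.det_fin_two, map_add, map_smul, smul_eq_mul]; ring
  have hyz : b.det ![y, z] = p * A := by
    simp only [A, hz_eq, b.det_fin_two, map_add, map_smul, smul_eq_mul]; ring
  have hA : cConst b ^ 2 * |A| ≤ 1 := by
    simpa [hx, hy] using sq_cConst_mul_abs_det_le b x y
  have hτ : cConst b ^ 2 * |τ| * |A| ≤ 1 := by
    simpa [hxz, hx, hz, abs_mul, mul_assoc] using sq_cConst_mul_abs_det_le b x z
  have hp : 1 ≤ CConst b ^ 2 * |p| * |A| := by
    simpa [hyz, hz, abs_mul, mul_assoc] using mul_norm_le_sq_CConst_mul_abs_det b hline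
  have hA_pos : 0 < |A| := pos_of_mul_pos_right (zero_lt_one.trans_le hp) (by positivity)
  refine ⟨le_of_mul_le_mul_right (hτ.trans hp) hA_pos, ?_⟩
  nlinarith [mul_le_mul_of_nonneg_left hA (by positivity : 0 ≤ CConst b ^ 2 * |p|)]

theorem supercurvature_bounds_general (b : Module.Basis (Fin 2) ℝ X)
    (hC1 : ContDiff ℝ 1 (natParam b))
    (φ P T : ℝ → ℝ)
    (hφ : ∀ s : ℝ, φ s ∈ Set.Ioo s (s + 2 * halfLen b) ∧
      deriv (natParam b) s = natParam b (φ s))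
    (hPT : ∀ s : ℝ, deriv (natParam b) (φ s) =
      (-(P s)) • natParam b s + T s • deriv (natParam b) s)
    (s : ℝ) :
    |T s| ≤ ((CConst b + cConst b) * CConst b / (cConst b)^2) * |P s| ∧
    (cConst b)^2 / ((CConst b)^2 + CConst b * cConst b + (cConst b)^2) ≤ |P s| := by
  have hc := cConst_pos b
  have hC := hc.trans_le (cConst_le_CConst b)
  have hr := norm_natParam b
  have hr' : ∀ u, ‖deriv (natParam b) u‖ = 1 := fun u => (hφ u).2 ▸ hr _
  -- `r'(s) + ℝ r'(φ s)` is the tangent line of the unit sphere at `r(φ s) = r'(s)`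
  have htangent : ∀ t : ℝ, 1 ≤ ‖deriv (natParam b) s + t • deriv (natParam b) (φ s)‖ := by
    intro t
    rw [(hφ s).2, ← hr (φ s)]
    exact norm_le_norm_add_smul_deriv (.of_forall fun u => (hr u).trans (hr _).symm |>.le)
      (hC1.differentiable one_ne_zero _) t
  obtain ⟨hT, hP⟩ := sq_cConst_mul_abs_le_and_sq_cConst_le b (hr s) (hr' s) (hr' (φ s))
    htangent (hPT s)
  constructor
  · calc |T s| ≤ CConst b ^ 2 / cConst b ^ 2 * |P s| := by
          rw [div_mul_eq_mul_div, le_div_iff₀ (by positivity)]; linarith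
      _ ≤ (CConst b + cConst b) * CConst b / cConst b ^ 2 * |P s| := by
          gcongr; nlinarith
  · calc cConst b ^ 2 / (CConst b ^ 2 + CConst b * cConst b + cConst b ^ 2)
        ≤ cConst b ^ 2 / CConst b ^ 2 := by gcongr; nlinarith
      _ ≤ |P s| := by rw [div_le_iff₀ (by positivity)]; linarith

/-- Bounds on the radial and tangential supercurvatures `P`, `T`. -/
theorem supercurvature_bounds [CompleteSpace X] (b : Module.Basis (Fin 2) ℝ X)
    (hC1 : ContDiff ℝ 1 (natParam b))
    (φ P T : ℝ → ℝ)
    (hφ : ∀ s : ℝ, φ s ∈ Set.Ioo s (s + 2 * halfLen b) ∧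
      deriv (natParam b) s = natParam b (φ s))
    (hPT : ∀ s : ℝ, deriv (natParam b) (φ s) =
      (-(P s)) • natParam b s + T s • deriv (natParam b) s)
    (s : ℝ) :
    |T s| ≤ ((CConst b + cConst b) * CConst b / (cConst b)^2) * |P s| ∧
    (cConst b)^2 / ((CConst b)^2 + CConst b * cConst b + (cConst b)^2) ≤ |P s| :=
  supercurvature_bounds_general b hC1 φ P T hφ hPT s

end
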